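/- For every n ≥ 1, x ≥ 0 and t ≥ 0, the n-th derivative of the Riccati flow in the initial condition satisfies |∂ⁿφ_t(x)/∂xⁿ| ≤ n!·ϖ²·|ϖ₋|^{−(n−1)}·e^{−λt}, where ϖ = 1 − ϖ₊/ϖ₋. Explicitly, ∂ⁿφ_t(x)/∂xⁿ = n!(−1)^{n+1}(ϖ₊ − ϖ₋)²(1 − e^{−λt})^{n−1}e^{−λt} / (e^{−λt}(ϖ₊ − ϖ₋) + (1 − e^{−λt})(x − ϖ₋))^{n+1}. -/

import Mathlib

/-!
For fixed `t`, `φ_t` is a Möbius map `y ↦ (a y + b) / (c y + d)` with `c = 1 - e^{-λt}` and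
`a d - b c = (ϖ₊ - ϖ₋)² e^{-λt}`, and the `(n+1)`-st derivative of a Möbius map is
`(n+1)! (-c)ⁿ (a d - b c) / (c y + d)^{n+2}`. For `x ≥ 0` the denominator `c x + d` is a
convex combination of `ϖ₊ - ϖ₋` and `x - ϖ₋`, both at least `|ϖ₋|`; with `0 ≤ c ≤ 1` this gives
the bound.
-/

noncomputable def lam (A R S : ℝ) : ℝ := 2 * Real.sqrt (A ^ 2 + R * S)

noncomputable def wplus (A R S : ℝ) : ℝ := (A + lam A R S / 2) / S

noncomputable def wminus (A R S : ℝ) : ℝ := (A - lam A R S / 2) / S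

/-- The closed-form Riccati semigroup `φ_t(x)`. -/
noncomputable def phi (A R S t x : ℝ) : ℝ :=
  wplus A R S +
    (x - wplus A R S) * ((wplus A R S - wminus A R S) * Real.exp (-(lam A R S) * t)) /
      ((wplus A R S - wminus A R S) * Real.exp (-(lam A R S) * t) +
        (x - wminus A R S) * (1 - Real.exp (-(lam A R S) * t)))

/-- `ϖ = 1 - ϖ₊/ϖ₋`. -/
noncomputable def vpi (A R S : ℝ) : ℝ := 1 - wplus A R S / wminus A R S

open Filter Topology

theorem hasDerivAt_const_div_affine_pow (K c d : ℝ) (m : ℕ) {x : ℝ} (hx : c * x + d ≠ 0) :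
    HasDerivAt (fun y => K / (c * y + d) ^ m) (-(m * c * K) / (c * x + d) ^ (m + 1)) x := by
  have hg : HasDerivAt (fun y => c * y + d) c x := by
    simpa using ((hasDerivAt_id x).const_mul c).add_const d
  refine ((hasDerivAt_const x K).fun_div (hg.fun_pow m) (pow_ne_zero m hx)).congr_deriv ?_
  rcases m with _ | m
  · simp
  · rw [Nat.add_sub_cancel]
    field_simp
    ring

theorem hasDerivAt_mobius (a b c d : ℝ) {x : ℝ} (hx : c * x + d ≠ 0) :
    HasDerivAt (fun y => (a * y + b) / (c * y + d)) ((a * d - b * c) / (c * x + d) ^ 2) x := by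
  have hf : HasDerivAt (fun y => a * y + b) a x := by
    simpa using ((hasDerivAt_id x).const_mul a).add_const b
  have hg : HasDerivAt (fun y => c * y + d) c x := by
    simpa using ((hasDerivAt_id x).const_mul c).add_const d
  exact (hf.fun_div hg hx).congr_deriv (by ring)

theorem iteratedDeriv_succ_mobius (a b c d : ℝ) (n : ℕ) {x : ℝ} (hx : c * x + d ≠ 0) :
    iteratedDeriv (n + 1) (fun y => (a * y + b) / (c * y + d)) x =
      (n + 1).factorial * (-c) ^ n * (a * d - b * c) / (c * x + d) ^ (n + 2) := by
  induction n generalizing x with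
  | zero =>
    simpa [iteratedDeriv_one] using (hasDerivAt_mobius a b c d hx).deriv
  | succ n ih =>
    have hnear : ∀ᶠ y in 𝓝 x, c * y + d ≠ 0 :=
      (continuous_const.mul continuous_id |>.add continuous_const).continuousAt.eventually_ne hx
    have heq : iteratedDeriv (n + 1) (fun y => (a * y + b) / (c * y + d)) =ᶠ[𝓝 x]
        fun y => (n + 1).factorial * (-c) ^ n * (a * d - b * c) / (c * y + d) ^ (n + 2) :=
      hnear.mono fun y hy => ih hy
    rw [iteratedDeriv_succ, heq.deriv_eq,
      (hasDerivAt_const_div_affine_pow _ c d (n + 2) hx).deriv, Nat.factorial_succ (n + 1)]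
    push_cast
    ring

theorem iteratedDeriv_succ_flow (p q e : ℝ) (n : ℕ) {x : ℝ}
    (hx : (p - q) * e + (x - q) * (1 - e) ≠ 0) :
    iteratedDeriv (n + 1)
        (fun y => p + (y - p) * ((p - q) * e) / ((p - q) * e + (y - q) * (1 - e))) x =
      (n + 1).factorial * (-1) ^ n * ((p - q) ^ 2 * (1 - e) ^ n * e) /
        ((p - q) * e + (x - q) * (1 - e)) ^ (n + 2) := by
  have hmobius :
      (fun y => p + (y - p) * ((p - q) * e) / ((p - q) * e + (y - q) * (1 - e))) =ᶠ[𝓝 x]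
      fun y => ((p * (1 - e) + (p - q) * e) * y + (-p * q * (1 - e))) /
        ((1 - e) * y + ((p - q) * e - q * (1 - e))) := by
    have hcont : Continuous fun y => (p - q) * e + (y - q) * (1 - e) := by fun_prop
    have hnear : ∀ᶠ y in 𝓝 x, (p - q) * e + (y - q) * (1 - e) ≠ 0 :=
      hcont.continuousAt.eventually_ne hx
    filter_upwards [hnear] with y hy
    rw [show (1 - e) * y + ((p - q) * e - q * (1 - e)) = (p - q) * e + (y - q) * (1 - e) by ring]
    field_simp
    ring
  have hx' : (1 - e) * x + ((p - q) * e - q * (1 - e)) = (p - q) * e + (x - q) * (1 - e) := by ring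
  rw [hmobius.iteratedDeriv_eq, iteratedDeriv_succ_mobius _ _ _ _ n (hx'.trans_ne hx), hx',
    neg_pow]
  ring

theorem neg_le_flow_denom {p q e x : ℝ} (hp : 0 ≤ p) (hx : 0 ≤ x) (he0 : 0 ≤ e)
    (he1 : e ≤ 1) :
    -q ≤ (p - q) * e + (x - q) * (1 - e) := by
  nlinarith [mul_nonneg hp he0, mul_nonneg hx (sub_nonneg.2 he1)]

theorem abs_flow_deriv_le {p q e x : ℝ} (hp : 0 ≤ p) (hq : q < 0) (hx : 0 ≤ x)
    (he0 : 0 ≤ e) (he1 : e ≤ 1) (n : ℕ) :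
    |(n + 1).factorial * (-1) ^ n * ((p - q) ^ 2 * (1 - e) ^ n * e) /
        ((p - q) * e + (x - q) * (1 - e)) ^ (n + 2)| ≤
      (n + 1).factorial * ((p - q) / |q|) ^ 2 / |q| ^ n * e := by
  have hq' : 0 < -q := neg_pos.2 hq
  have hG := neg_le_flow_denom (q := q) hp hx he0 he1
  have hc : 0 ≤ 1 - e := sub_nonneg.2 he1
  have hnum : 0 ≤ (p - q) ^ 2 * (1 - e) ^ n * e := by positivity
  rw [abs_div, abs_mul, abs_mul, abs_pow, abs_neg, abs_one, one_pow, mul_one, Nat.abs_cast,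
    abs_of_nonneg hnum, abs_of_pos (pow_pos (hq'.trans_le hG) _), abs_of_neg hq]
  calc (n + 1).factorial * ((p - q) ^ 2 * (1 - e) ^ n * e) /
        ((p - q) * e + (x - q) * (1 - e)) ^ (n + 2)
      ≤ (n + 1).factorial * ((p - q) ^ 2 * 1 * e) / (-q) ^ (n + 2) := by
        gcongr
        exact pow_le_one₀ hc (by linarith)
    _ = (n + 1).factorial * ((p - q) / -q) ^ 2 / (-q) ^ n * e := by
        field_simp [hq.ne]
        ring

theorem lam_nonneg (A R S : ℝ) : 0 ≤ lam A R S := by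
  unfold lam
  positivity

theorem abs_lt_half_lam {A R S : ℝ} (hR : 0 < R) (hS : 0 < S) : |A| < lam A R S / 2 := by
  rw [lam, mul_div_cancel_left₀ _ two_ne_zero, Real.lt_sqrt (abs_nonneg A), sq_abs]
  nlinarith [mul_pos hR hS]

theorem wplus_pos {A R S : ℝ} (hR : 0 < R) (hS : 0 < S) : 0 < wplus A R S :=
  div_pos (by linarith [neg_abs_le A, abs_lt_half_lam (A := A) hR hS]) hS

theorem wminus_neg {A R S : ℝ} (hR : 0 < R) (hS : 0 < S) : wminus A R S < 0 :=
  div_neg_of_neg_of_pos (by linarith [le_abs_self A, abs_lt_half_lam (A := A) hR hS]) hS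

theorem vpi_eq_div_abs {A R S : ℝ} (h : wminus A R S < 0) :
    vpi A R S = (wplus A R S - wminus A R S) / |wminus A R S| := by
  rw [vpi, abs_of_neg h]
  field_simp [h.ne]
  ring

theorem riccati_flow_nth_derivative (A R S : ℝ) (hR : 0 < R) (hS : 0 < S)
    (n : ℕ) (hn : 1 ≤ n) (t x : ℝ) (ht : 0 ≤ t) (hx : 0 ≤ x) :
    iteratedDeriv n (fun y => phi A R S t y) x =
      (n.factorial : ℝ) * (-1) ^ (n + 1) *
        ((wplus A R S - wminus A R S) ^ 2 *
            (1 - Real.exp (-(lam A R S) * t)) ^ (n - 1) * Real.exp (-(lam A R S) * t)) /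
          (Real.exp (-(lam A R S) * t) * (wplus A R S - wminus A R S) +
              (1 - Real.exp (-(lam A R S) * t)) * (x - wminus A R S)) ^ (n + 1) ∧
    |iteratedDeriv n (fun y => phi A R S t y) x| ≤
      (n.factorial : ℝ) * vpi A R S ^ 2 / |wminus A R S| ^ (n - 1) *
        Real.exp (-(lam A R S) * t) := by
  obtain ⟨m, rfl⟩ := Nat.exists_eq_add_of_le' hn
  set e := Real.exp (-(lam A R S) * t)
  have hq := wminus_neg (A := A) hR hS
  have hp := (wplus_pos (A := A) hR hS).le
  have he0 : 0 ≤ e := (Real.exp_pos _).le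
  have he1 : e ≤ 1 :=
    Real.exp_le_one_iff.2 (mul_nonpos_of_nonpos_of_nonneg (neg_nonpos.2 (lam_nonneg A R S)) ht)
  have hden := (neg_pos.2 hq).trans_le (neg_le_flow_denom hp hx he0 he1)
  have hderiv : iteratedDeriv (m + 1) (fun y => phi A R S t y) x = _ :=
    iteratedDeriv_succ_flow (wplus A R S) (wminus A R S) e m hden.ne'
  rw [Nat.add_sub_cancel, hderiv, vpi_eq_div_abs hq]
  exact ⟨by ring, abs_flow_deriv_le hp hq hx he0 he1 m⟩
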